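/- Let H be a class of binary hypotheses on X_space with VC dimension at least ν, and let Δ_1 = 0 ≤ Δ_2 ≤ ⋯ ≤ Δ_T be nonnegative reals with Φ* = min_{1 ≤ r ≤ T}(√(ν/r) + Δ_r) < 1/3. Then for every measurable map 𝒜 : (X_space × {0,1})^T → H there exist probability distributions P_1, …, P_T on X_space × {0,1} satisfying max_{0 ≤ t ≤ r−1} ‖P_T − P_{T−t}‖_F ≤ Δ_r for every 1 ≤ r ≤ T, such that if Z_1, …, Z_T are independent with Z_t ∼ P_t, then with probability at least 1/8, P_T(L_{𝒜(Z_1,…,Z_T)}) − min_{h ∈ H} P_T(L_h) ≥ Φ*/(112√6). -/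

import Mathlib

open MeasureTheory
set_option maxHeartbeats 1000000

/-- The zero-one loss `L_h(x, y) = 1` if `y ≠ h(x)` and `0` otherwise. -/
noncomputable def lossB {X : Type*} (h : X → Bool) (z : X × Bool) : ℝ :=
  if z.2 = h z.1 then 0 else 1

section S18Aux
open Finset


noncomputable def s18m (n : ℕ) (e : ℝ) (σ : Fin n → Bool) (ω : Fin n × Bool) : ℝ :=
  (1 / (n:ℝ)) * (if ω.2 = σ ω.1 then 1/2 + e else 1/2 - e)

noncomputable def s18w (n T k : ℕ) (ε : ℝ) (σ : Fin n → Bool) (t : Fin T)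
    (ω : Fin n × Bool) : ℝ :=
  if T - k < (t:ℕ) + 1 then s18m n ε σ ω else s18m n 0 σ ω

lemma s18m_nonneg {n : ℕ} {e : ℝ} (he : 0 ≤ e) (he2 : e ≤ 1/2) (σ : Fin n → Bool)
    (ω : Fin n × Bool) : 0 ≤ s18m n e σ ω := by
  unfold s18m
  have h1 : (0:ℝ) ≤ 1 / (n:ℝ) := by positivity
  have h2 : (0:ℝ) ≤ if ω.2 = σ ω.1 then 1/2 + e else 1/2 - e := by
    split <;> linarith
  exact mul_nonneg h1 h2

lemma s18m_zero {n : ℕ} (σ : Fin n → Bool) (ω : Fin n × Bool) :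
    s18m n 0 σ ω = 1 / (2 * (n:ℝ)) := by
  unfold s18m
  split <;> ring

lemma s18m_sum {n : ℕ} (hn : 1 ≤ n) (e : ℝ) (σ : Fin n → Bool) :
    ∑ ω : Fin n × Bool, s18m n e σ ω = 1 := by
  have hn0 : (n:ℝ) ≠ 0 := by positivity
  rw [Fintype.sum_prod_type]
  have h : ∀ i : Fin n, ∑ y : Bool, s18m n e σ (i, y) = 1 / (n:ℝ) := by
    intro i
    rw [Fintype.sum_bool]
    unfold s18m
    cases hσ : σ i <;> simp [hσ] <;> ring
  rw [Finset.sum_congr rfl fun i _ => h i]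
  rw [Finset.sum_const, Finset.card_univ, Fintype.card_fin]
  rw [nsmul_eq_mul]
  field_simp

lemma s18_sqrt_prod' {ι : Type*} (s : Finset ι) (f : ι → ℝ) (hf : ∀ i ∈ s, 0 ≤ f i) :
    Real.sqrt (∏ i ∈ s, f i) = ∏ i ∈ s, Real.sqrt (f i) := by
  induction s using Finset.cons_induction with
  | empty => simp
  | cons a s ha ih =>
    rw [Finset.prod_cons, Finset.prod_cons, Real.sqrt_mul (hf a (Finset.mem_cons_self a s)),
      ih (fun i hi => hf i (Finset.mem_cons_of_mem hi))]

-- count of informative coordinates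
lemma s18_card_informative {T k : ℕ} (hk : 1 ≤ k) (hkT : k ≤ T) :
    (Finset.univ.filter fun t : Fin T => T - k < (t:ℕ) + 1).card = k := by
  have h1 : (Finset.univ.filter fun t : Fin T => T - k < (t:ℕ) + 1).card
      = ((Finset.range T).filter fun j => T - k < j + 1).card := by
    rw [Finset.card_filter, Finset.card_filter,
      ← Fin.sum_univ_eq_sum_range (fun j => if T - k < j + 1 then 1 else 0)]
  rw [h1]
  have h2 : (Finset.range T).filter (fun j => T - k < j + 1) = Finset.Ico (T - k) T := by
    ext j
    simp only [Finset.mem_filter, Finset.mem_range, Finset.mem_Ico]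
    omega
  rw [h2, Nat.card_Ico]
  omega

lemma s18_coord {n : ℕ} (hn : 1 ≤ n) {ε : ℝ} (hε : 0 ≤ ε) (hε4 : ε ≤ 1/4)
    (σ : Fin n → Bool) (i : Fin n) :
    1 - 4*ε^2/(n:ℝ) ≤ ∑ ω : Fin n × Bool,
      Real.sqrt (s18m n ε σ ω * s18m n ε (Function.update σ i (!σ i)) ω) := by
  have hn0 : (0:ℝ) < (n:ℝ) := by exact_mod_cast hn
  rw [Fintype.sum_prod_type]
  have hterm : ∀ j : Fin n, (∑ y : Bool,
      Real.sqrt (s18m n ε σ (j, y) * s18m n ε (Function.update σ i (!σ i)) (j, y)))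
      = if j = i then (2/(n:ℝ)) * Real.sqrt (1/4 - ε^2) else 1/(n:ℝ) := by
    intro j
    rcases eq_or_ne j i with rfl | hji
    · simp only [if_pos rfl]
      have hval : ∀ y : Bool, s18m n ε σ (j, y) * s18m n ε (Function.update σ j (!σ j)) (j, y)
          = (1/(n:ℝ))^2 * (1/4 - ε^2) := by
        intro y
        unfold s18m
        simp only [Function.update_self]
        cases hσ : σ j <;> cases y <;> simp [hσ] <;> ring
      rw [Fintype.sum_bool, hval, hval]
      rw [Real.sqrt_mul (by positivity), Real.sqrt_sq (by positivity)]
      simp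
      ring
    · simp only [if_neg hji]
      have hupd : Function.update σ i (!σ i) j = σ j := Function.update_of_ne hji _ _
      have hval : ∀ y : Bool, Real.sqrt (s18m n ε σ (j, y)
          * s18m n ε (Function.update σ i (!σ i)) (j, y)) = s18m n ε σ (j, y) := by
        intro y
        have : s18m n ε (Function.update σ i (!σ i)) (j, y) = s18m n ε σ (j, y) := by
          unfold s18m; rw [hupd]
        rw [this, Real.sqrt_mul_self (s18m_nonneg hε (by linarith) σ (j, y))]
      rw [Fintype.sum_bool, hval, hval]
      unfold s18m
      cases hσ : σ j <;> simp [hσ] <;> ring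
  rw [Finset.sum_congr rfl fun j _ => hterm j]
  rw [← Finset.add_sum_erase _ _ (Finset.mem_univ i), if_pos rfl]
  have herase : ∑ j ∈ Finset.univ.erase i,
      (if j = i then (2/(n:ℝ)) * Real.sqrt (1/4 - ε^2) else 1/(n:ℝ)) = ((n:ℝ) - 1) / n := by
    rw [Finset.sum_congr rfl fun j hj => if_neg (Finset.mem_erase.mp hj).1]
    rw [Finset.sum_const, Finset.card_erase_of_mem (Finset.mem_univ i),
      Finset.card_univ, Fintype.card_fin]
    rw [nsmul_eq_mul]
    rw [Nat.cast_sub hn]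
    push_cast
    ring
  rw [herase]
  have hε2 : ε^2 ≤ 1/16 := by nlinarith
  have hs : 1/2 - 2*ε^2 ≤ Real.sqrt (1/4 - ε^2) :=
    Real.le_sqrt_of_sq_le (by nlinarith [sq_nonneg ε])
  rw [show (2/(n:ℝ)) * Real.sqrt (1/4 - ε^2) = (2 * Real.sqrt (1/4 - ε^2))/n by ring,
    ← add_div,
    show 1 - 4*ε^2/(n:ℝ) = ((n:ℝ) - 4*ε^2)/n by field_simp,
    div_le_div_iff_of_pos_right hn0]
  nlinarith [hs]

lemma s18_amgm {a b : ℝ} (ha : 0 ≤ a) (hb : 0 ≤ b) : Real.sqrt (a * b) ≤ (a + b) / 2 := by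
  have h1 : a * b ≤ ((a + b) / 2) ^ 2 := by nlinarith [sq_nonneg (a - b)]
  calc Real.sqrt (a * b) ≤ Real.sqrt (((a + b) / 2) ^ 2) := Real.sqrt_le_sqrt h1
    _ = (a + b) / 2 := Real.sqrt_sq (by linarith)

lemma s18_minsum {U : Type*} [Fintype U] (g g' : U → ℝ) (hg : ∀ u, 0 ≤ g u)
    (hg' : ∀ u, 0 ≤ g' u) (hsg : ∑ u, g u = 1) (hsg' : ∑ u, g' u = 1)
    {b : ℝ} (hB : b ≤ ∑ u, Real.sqrt (g u * g' u)) :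
    1 - Real.sqrt (2 * (1 - b)) ≤ ∑ u, min (g u) (g' u) := by
  set B := ∑ u, Real.sqrt (g u * g' u) with hBdef
  have hB1 : B ≤ 1 := by
    calc B ≤ ∑ u, (g u + g' u) / 2 :=
          Finset.sum_le_sum fun u _ => s18_amgm (hg u) (hg' u)
      _ = 1 := by
          rw [← Finset.sum_div, Finset.sum_add_distrib, hsg, hsg']; norm_num
  -- D = sum of |g - g'|
  set D := ∑ u, |g u - g' u| with hDdef
  have hmin : ∑ u, min (g u) (g' u) = 1 - D / 2 := by
    have : ∀ u, min (g u) (g' u) = (g u + g' u - |g u - g' u|) / 2 := by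
      intro u
      rcases le_total (g u) (g' u) with h | h
      · rw [min_eq_left h, abs_of_nonpos (by linarith)]; ring
      · rw [min_eq_right h, abs_of_nonneg (by linarith)]; ring
    simp_rw [this]
    rw [← Finset.sum_div, Finset.sum_sub_distrib, Finset.sum_add_distrib, hsg, hsg', ← hDdef]
    ring
  rw [hmin]
  have hD2 : D ^ 2 ≤ (2 - 2 * B) * 4 := by
    have key : ∀ u, |g u - g' u| = |Real.sqrt (g u) - Real.sqrt (g' u)| *
        (Real.sqrt (g u) + Real.sqrt (g' u)) := by
      intro u
      rw [← abs_of_nonneg (a := Real.sqrt (g u) + Real.sqrt (g' u))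
        (by positivity), ← abs_mul]
      congr 1
      linear_combination Real.sq_sqrt (hg' u) - Real.sq_sqrt (hg u)
    have hcs := Finset.sum_mul_sq_le_sq_mul_sq Finset.univ
      (fun u => |Real.sqrt (g u) - Real.sqrt (g' u)|)
      (fun u => Real.sqrt (g u) + Real.sqrt (g' u))
    have e1 : ∑ u, |Real.sqrt (g u) - Real.sqrt (g' u)| ^ 2 = 2 - 2 * B := by
      have : ∀ u, |Real.sqrt (g u) - Real.sqrt (g' u)| ^ 2
          = g u + g' u - 2 * Real.sqrt (g u * g' u) := by
        intro u
        rw [sq_abs, sub_sq, Real.sq_sqrt (hg u), Real.sq_sqrt (hg' u),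
          Real.sqrt_mul (hg u)]
        ring
      simp_rw [this]
      rw [Finset.sum_sub_distrib, Finset.sum_add_distrib, hsg, hsg', ← Finset.mul_sum, ← hBdef]
      ring
    have e2 : ∑ u, (Real.sqrt (g u) + Real.sqrt (g' u)) ^ 2 ≤ 4 := by
      have : ∀ u, (Real.sqrt (g u) + Real.sqrt (g' u)) ^ 2
          = g u + g' u + 2 * Real.sqrt (g u * g' u) := by
        intro u
        rw [add_sq, Real.sq_sqrt (hg u), Real.sq_sqrt (hg' u), Real.sqrt_mul (hg u)]
        ring
      simp_rw [this]
      rw [Finset.sum_add_distrib, Finset.sum_add_distrib, hsg, hsg', ← Finset.mul_sum, ← hBdef]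
      linarith
    calc D ^ 2 = (∑ u, |Real.sqrt (g u) - Real.sqrt (g' u)| *
          (Real.sqrt (g u) + Real.sqrt (g' u))) ^ 2 := by rw [hDdef]; congr 1; exact Finset.sum_congr rfl fun u _ => key u
      _ ≤ (∑ u, |Real.sqrt (g u) - Real.sqrt (g' u)| ^ 2) *
          ∑ u, (Real.sqrt (g u) + Real.sqrt (g' u)) ^ 2 := hcs
      _ = (2 - 2 * B) * ∑ u, (Real.sqrt (g u) + Real.sqrt (g' u)) ^ 2 := by rw [e1]
      _ ≤ (2 - 2 * B) * 4 := mul_le_mul_of_nonneg_left e2 (by rw [← e1]; positivity)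
  have hDnn : 0 ≤ D := Finset.sum_nonneg fun u _ => abs_nonneg _
  have hD : D / 2 ≤ Real.sqrt (2 * (1 - b)) := by
    refine Real.le_sqrt_of_sq_le ?_
    nlinarith
  linarith

lemma s18core {n T k : ℕ} (hn : 1 ≤ n) (hk : 1 ≤ k) (hkT : k ≤ T) {ε : ℝ}
    (hε : 0 < ε) (hε4 : ε ≤ 1/4) (hTV : 8 * (k:ℝ) * ε^2 ≤ (n:ℝ) * (1/4))
    (β : (Fin T → Fin n × Bool) → Fin n → Bool) :
    ∃ σ : Fin n → Bool, 1/8 ≤ ∑ u ∈ Finset.univ.filter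
      (fun u : Fin T → Fin n × Bool =>
        (n:ℝ) ≤ 8 * ((Finset.univ.filter fun i => β u i ≠ σ i).card : ℝ)),
      ∏ t, s18w n T k ε σ t (u t) := by
  classical
  have hn0 : (0:ℝ) < (n:ℝ) := by exact_mod_cast hn
  set g : (Fin n → Bool) → (Fin T → Fin n × Bool) → ℝ :=
    fun σ u => ∏ t, s18w n T k ε σ t (u t) with hgdef
  have hw0 : ∀ σ t ω, 0 ≤ s18w n T k ε σ t ω := by
    intro σ t ω
    unfold s18w
    split
    · exact s18m_nonneg hε.le (by linarith) σ ω
    · exact s18m_nonneg le_rfl (by norm_num) σ ω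
  have hwsum : ∀ σ (t : Fin T), ∑ ω : Fin n × Bool, s18w n T k ε σ t ω = 1 := by
    intro σ t
    unfold s18w
    split
    · exact s18m_sum hn ε σ
    · exact s18m_sum hn 0 σ
  have hg0 : ∀ σ u, 0 ≤ g σ u := fun σ u =>
    Finset.prod_nonneg fun t _ => hw0 σ t (u t)
  have hgsum : ∀ σ, ∑ u : Fin T → Fin n × Bool, g σ u = 1 := by
    intro σ
    rw [hgdef, ← Fintype.piFinset_univ, ← Finset.prod_univ_sum]
    rw [Finset.prod_congr rfl fun t _ => hwsum σ t]
    simp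
  -- pairwise Bhattacharyya bound
  set flp : (Fin n → Bool) → Fin n → (Fin n → Bool) :=
    fun σ i => Function.update σ i (!σ i) with hflpdef
  have hpair : ∀ σ i, (1:ℝ)/2 ≤ ∑ u : Fin T → Fin n × Bool,
      min (g σ u) (g (flp σ i) u) := by
    intro σ i
    have hB : 1 - 4*(k:ℝ)*ε^2/(n:ℝ) ≤ ∑ u : Fin T → Fin n × Bool,
        Real.sqrt (g σ u * g (flp σ i) u) := by
      have hsq : ∀ u : Fin T → Fin n × Bool, Real.sqrt (g σ u * g (flp σ i) u)
          = ∏ t, Real.sqrt (s18w n T k ε σ t (u t) * s18w n T k ε (flp σ i) t (u t)) := by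
        intro u
        rw [hgdef, ← Finset.prod_mul_distrib]
        exact s18_sqrt_prod' _ _ fun t _ => mul_nonneg (hw0 σ t (u t)) (hw0 _ t (u t))
      rw [Finset.sum_congr rfl fun u _ => hsq u]
      have hfub := Finset.prod_univ_sum (fun _ : Fin T => (Finset.univ : Finset (Fin n × Bool)))
        (fun t ω => Real.sqrt (s18w n T k ε σ t ω * s18w n T k ε (flp σ i) t ω))
      rw [Fintype.piFinset_univ] at hfub
      rw [← hfub]
      -- per-coordinate bound
      have hcoord : ∀ t : Fin T, (if T - k < (t:ℕ) + 1 then 1 - 4*ε^2/(n:ℝ) else 1)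
          ≤ ∑ ω : Fin n × Bool, Real.sqrt (s18w n T k ε σ t ω * s18w n T k ε (flp σ i) t ω) := by
        intro t
        unfold s18w
        split
        · exact s18_coord hn hε.le hε4 σ i
        · have heq : ∀ ω, s18m n 0 (flp σ i) ω = s18m n 0 σ ω := by
            intro ω; rw [s18m_zero, s18m_zero]
          have : ∀ ω : Fin n × Bool, Real.sqrt (s18m n 0 σ ω * s18m n 0 (flp σ i) ω)
              = s18m n 0 σ ω := by
            intro ω
            rw [heq ω, Real.sqrt_mul_self (s18m_nonneg le_rfl (by norm_num) σ ω)]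
          rw [Finset.sum_congr rfl fun ω _ => this ω, s18m_sum hn 0 σ]
      have hn1 : (1:ℝ) ≤ (n:ℝ) := by exact_mod_cast hn
      have hc0 : (0:ℝ) ≤ 1 - 4*ε^2/(n:ℝ) := by
        rw [sub_nonneg, div_le_one hn0]
        nlinarith [hn1, mul_le_mul_of_nonneg_left hε4 hε.le]
      have hprodle : ∏ t : Fin T, (if T - k < (t:ℕ) + 1 then 1 - 4*ε^2/(n:ℝ) else 1)
          ≤ ∏ t : Fin T, ∑ ω : Fin n × Bool,
            Real.sqrt (s18w n T k ε σ t ω * s18w n T k ε (flp σ i) t ω) := by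
        refine Finset.prod_le_prod (fun t _ => ?_) (fun t _ => hcoord t)
        split
        · exact hc0
        · norm_num
      have hprodeq : ∏ t : Fin T, (if T - k < (t:ℕ) + 1 then 1 - 4*ε^2/(n:ℝ) else 1)
          = (1 - 4*ε^2/(n:ℝ)) ^ k := by
        rw [Finset.prod_ite, Finset.prod_const, Finset.prod_const_one, mul_one,
          s18_card_informative hk hkT]
      have hbern : 1 - 4*(k:ℝ)*ε^2/(n:ℝ) ≤ (1 - 4*ε^2/(n:ℝ)) ^ k := by
        have := one_add_mul_le_pow (a := -(4*ε^2/(n:ℝ))) (by nlinarith [hc0]) k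
        calc 1 - 4*(k:ℝ)*ε^2/(n:ℝ) = 1 + (k:ℝ) * (-(4*ε^2/(n:ℝ))) := by ring
          _ ≤ (1 + -(4*ε^2/(n:ℝ))) ^ k := this
          _ = (1 - 4*ε^2/(n:ℝ)) ^ k := by ring_nf
      calc 1 - 4*(k:ℝ)*ε^2/(n:ℝ) ≤ (1 - 4*ε^2/(n:ℝ)) ^ k := hbern
        _ = _ := hprodeq.symm
        _ ≤ _ := hprodle
    have hmin := s18_minsum (g σ) (g (flp σ i)) (hg0 σ) (hg0 (flp σ i))
      (hgsum σ) (hgsum (flp σ i)) hB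
    have hsqle : Real.sqrt (2 * (1 - (1 - 4*(k:ℝ)*ε^2/(n:ℝ)))) ≤ 1/2 := by
      rw [show 2 * (1 - (1 - 4*(k:ℝ)*ε^2/(n:ℝ))) = 8*(k:ℝ)*ε^2/(n:ℝ) by ring]
      have h8 : 8*(k:ℝ)*ε^2/(n:ℝ) ≤ 1/4 := by
        rw [div_le_iff₀ hn0]; linarith [hTV]
      calc Real.sqrt (8*(k:ℝ)*ε^2/(n:ℝ)) ≤ Real.sqrt (1/4) := Real.sqrt_le_sqrt h8
        _ = 1/2 := by
          rw [show (1:ℝ)/4 = (1/2)^2 by norm_num, Real.sqrt_sq (by norm_num)]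
    linarith [hmin, hsqle]
  -- Le Cam step
  set F : (Fin n → Bool) → Fin n → ℝ := fun σ i =>
    ∑ u ∈ Finset.univ.filter (fun u => β u i ≠ σ i), g σ u with hFdef
  have hcompl : ∀ (σ : Fin n → Bool) (i : Fin n),
      (Finset.univ.filter fun u : Fin T → Fin n × Bool => β u i ≠ flp σ i i)
      = Finset.univ.filter (fun u : Fin T → Fin n × Bool => ¬ (β u i ≠ σ i)) := by
    intro σ i
    refine Finset.filter_congr fun u _ => ?_
    have hfs : flp σ i i = !σ i := Function.update_self i (!σ i) σ
    rw [hfs]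
    cases β u i <;> cases σ i <;> simp
  have hLeCam : ∀ (σ : Fin n → Bool) (i : Fin n), 1/2 ≤ F σ i + F (flp σ i) i := by
    intro σ i
    have h1 : ∑ u ∈ Finset.univ.filter (fun u : Fin T → Fin n × Bool => β u i ≠ σ i),
        min (g σ u) (g (flp σ i) u) ≤ F σ i :=
      Finset.sum_le_sum fun u _ => min_le_left _ _
    have h3 : F (flp σ i) i = ∑ u ∈ Finset.univ.filter
        (fun u : Fin T → Fin n × Bool => ¬ (β u i ≠ σ i)), g (flp σ i) u := by
      rw [hFdef]
      exact Finset.sum_congr (hcompl σ i) fun u _ => rfl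
    have h2 : ∑ u ∈ Finset.univ.filter (fun u : Fin T → Fin n × Bool => ¬ (β u i ≠ σ i)),
        min (g σ u) (g (flp σ i) u) ≤ F (flp σ i) i := by
      rw [h3]
      exact Finset.sum_le_sum fun u _ => min_le_right _ _
    have h4 := Finset.sum_filter_add_sum_filter_not Finset.univ
      (fun u : Fin T → Fin n × Bool => β u i ≠ σ i)
      (fun u => min (g σ u) (g (flp σ i) u))
    have h5 := hpair σ i
    linarith
  have hflip_inv : ∀ i : Fin n, Function.Involutive (fun σ : Fin n → Bool => flp σ i) := by
    intro i σ
    funext j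
    rcases eq_or_ne j i with rfl | hj
    · simp [hflpdef, Function.update_self]
    · simp [hflpdef, Function.update_of_ne hj]
  have hreindex : ∀ i : Fin n,
      ∑ σ : Fin n → Bool, F (flp σ i) i = ∑ σ : Fin n → Bool, F σ i :=
    fun i => Fintype.sum_bijective _ (hflip_inv i).bijective _ _ (fun σ => rfl)
  have hcard2 : ((Finset.univ : Finset (Fin n → Bool)).card : ℝ) = 2^n := by
    simp [Finset.card_univ]
  have hsum_i : ∀ i : Fin n, (2:ℝ)^n / 4 ≤ ∑ σ : Fin n → Bool, F σ i := by
    intro i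
    have hs := Finset.sum_le_sum (fun σ (_ : σ ∈ (Finset.univ : Finset (Fin n → Bool))) =>
      hLeCam σ i)
    rw [Finset.sum_add_distrib, hreindex i, Finset.sum_const, nsmul_eq_mul] at hs
    rw [hcard2] at hs
    linarith
  have hswap : ∀ σ : Fin n → Bool, ∑ i : Fin n, F σ i
      = ∑ u : Fin T → Fin n × Bool, g σ u
        * ((Finset.univ.filter fun i => β u i ≠ σ i).card : ℝ) := by
    intro σ
    rw [hFdef]
    simp only [Finset.sum_filter]
    rw [Finset.sum_comm]
    refine Finset.sum_congr rfl fun u _ => ?_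
    have hmul : ∀ i : Fin n, (if β u i ≠ σ i then g σ u else 0)
        = g σ u * (if β u i ≠ σ i then 1 else 0) := fun i => by split <;> simp
    rw [Finset.sum_congr rfl fun i _ => hmul i, ← Finset.mul_sum, Finset.sum_boole]
  have htotal : (n:ℝ) * ((2:ℝ)^n / 4) ≤ ∑ σ : Fin n → Bool, ∑ i : Fin n, F σ i := by
    rw [Finset.sum_comm]
    calc (n:ℝ) * ((2:ℝ)^n/4) = ∑ _i : Fin n, (2:ℝ)^n/4 := by
          rw [Finset.sum_const, Finset.card_univ, Fintype.card_fin, nsmul_eq_mul]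
      _ ≤ _ := Finset.sum_le_sum fun i _ => hsum_i i
  have hexists : ∃ σ : Fin n → Bool, (n:ℝ)/4 ≤ ∑ i : Fin n, F σ i := by
    by_contra hcon
    push_neg at hcon
    have hlt : ∑ σ : Fin n → Bool, ∑ i : Fin n, F σ i
        < ∑ _σ : Fin n → Bool, (n:ℝ)/4 :=
      Finset.sum_lt_sum_of_nonempty Finset.univ_nonempty fun σ _ => hcon σ
    rw [Finset.sum_const, nsmul_eq_mul, hcard2] at hlt
    nlinarith [htotal]
  obtain ⟨σ, hσ⟩ := hexists
  refine ⟨σ, ?_⟩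
  rw [hswap σ] at hσ
  set W : (Fin T → Fin n × Bool) → ℝ :=
    fun u => ((Finset.univ.filter fun i => β u i ≠ σ i).card : ℝ) with hWdef
  have hW0 : ∀ u, 0 ≤ W u := fun u => Nat.cast_nonneg _
  have hWn : ∀ u, W u ≤ (n:ℝ) := by
    intro u
    have hcle := (Finset.card_filter_le Finset.univ (fun i : Fin n => β u i ≠ σ i)).trans
      (le_of_eq (by rw [Finset.card_univ, Fintype.card_fin]))
    show ((Finset.univ.filter fun i => β u i ≠ σ i).card : ℝ) ≤ (n:ℝ)
    exact_mod_cast hcle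
  have hsplitg := Finset.sum_filter_add_sum_filter_not Finset.univ
    (fun u : Fin T → Fin n × Bool => (n:ℝ) ≤ 8 * W u) (g σ)
  have hsplitgw := Finset.sum_filter_add_sum_filter_not Finset.univ
    (fun u : Fin T → Fin n × Bool => (n:ℝ) ≤ 8 * W u) (fun u => g σ u * W u)
  have hb1 : ∑ u ∈ Finset.univ.filter (fun u : Fin T → Fin n × Bool => (n:ℝ) ≤ 8 * W u),
      g σ u * W u
      ≤ (∑ u ∈ Finset.univ.filter (fun u : Fin T → Fin n × Bool => (n:ℝ) ≤ 8 * W u),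
        g σ u) * (n:ℝ) := by
    rw [Finset.sum_mul]
    exact Finset.sum_le_sum fun u _ => mul_le_mul_of_nonneg_left (hWn u) (hg0 σ u)
  have hb2 : ∑ u ∈ Finset.univ.filter (fun u : Fin T → Fin n × Bool => ¬ ((n:ℝ) ≤ 8 * W u)),
      g σ u * W u
      ≤ (∑ u ∈ Finset.univ.filter (fun u : Fin T → Fin n × Bool => ¬ ((n:ℝ) ≤ 8 * W u)),
        g σ u) * ((n:ℝ)/8) := by
    rw [Finset.sum_mul]
    refine Finset.sum_le_sum fun u hu => ?_
    have hu' : ¬ ((n:ℝ) ≤ 8 * W u) := (Finset.mem_filter.mp hu).2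
    exact mul_le_mul_of_nonneg_left (by linarith [not_le.mp hu']) (hg0 σ u)
  have hp0 : 0 ≤ ∑ u ∈ Finset.univ.filter
      (fun u : Fin T → Fin n × Bool => (n:ℝ) ≤ 8 * W u), g σ u :=
    Finset.sum_nonneg fun u _ => hg0 σ u
  have hq0 : 0 ≤ ∑ u ∈ Finset.univ.filter
      (fun u : Fin T → Fin n × Bool => ¬ ((n:ℝ) ≤ 8 * W u)), g σ u :=
    Finset.sum_nonneg fun u _ => hg0 σ u
  have hgs := hgsum σ
  rw [← hsplitg] at hgs
  nlinarith [hσ, hsplitgw, hb1, hb2, hn0, hp0, hq0]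

noncomputable def s18M {Xs : Type*} [MeasurableSpace Xs] {n : ℕ} (Xb : Fin n → Xs)
    (e : ℝ) (σ : Fin n → Bool) : Measure (Xs × Bool) :=
  ∑ ω : Fin n × Bool, ENNReal.ofReal (s18m n e σ ω) • Measure.dirac (Xb ω.1, ω.2)

section M
variable {Xs : Type*} [MeasurableSpace Xs] {n : ℕ} {Xb : Fin n → Xs} {e : ℝ}
  {σ : Fin n → Bool}

lemma s18M_prob (hn : 1 ≤ n) (he : 0 ≤ e) (he2 : e ≤ 1/2) :
    IsProbabilityMeasure (s18M Xb e σ) := by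
  constructor
  rw [s18M, Measure.finset_sum_apply]
  have h : ∀ ω : Fin n × Bool,
      (ENNReal.ofReal (s18m n e σ ω) • Measure.dirac (Xb ω.1, ω.2)) Set.univ
      = ENNReal.ofReal (s18m n e σ ω) := by
    intro ω
    rw [Measure.smul_apply, measure_univ, smul_eq_mul, mul_one]
  rw [Finset.sum_congr rfl fun ω _ => h ω,
    ← ENNReal.ofReal_sum_of_nonneg (fun ω _ => s18m_nonneg he he2 σ ω),
    s18m_sum hn e σ, ENNReal.ofReal_one]

lemma s18_integrable_dirac' {α : Type*} [MeasurableSpace α] [MeasurableSingletonClass α]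
    (f : α → ℝ) (a : α) : Integrable f (Measure.dirac a) := by
  have h : f =ᵐ[Measure.dirac a] fun _ => f a := by
    rw [Filter.EventuallyEq, ae_iff]
    have hsub : {x | ¬ f x = f a} ⊆ {a}ᶜ := by
      intro x hx
      simp only [Set.mem_compl_iff, Set.mem_singleton_iff]
      rintro rfl; exact hx rfl
    refine measure_mono_null hsub ?_
    rw [Measure.dirac_apply]
    simp
  exact (integrable_const (f a)).congr h.symm

lemma s18M_integral [MeasurableSingletonClass Xs] (hn : 1 ≤ n) (he : 0 ≤ e) (he2 : e ≤ 1/2)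
    (f : Xs → Bool) :
    ∫ z, lossB f z ∂(s18M Xb e σ)
      = 1/2 - e + (2*e/(n:ℝ))
        * ((Finset.univ.filter fun i => f (Xb i) ≠ σ i).card : ℝ) := by
  have hn0 : (0:ℝ) < (n:ℝ) := by exact_mod_cast hn
  rw [s18M, integral_finset_sum_measure (fun ω _ =>
    (s18_integrable_dirac' (lossB f) (Xb ω.1, ω.2)).smul_measure ENNReal.ofReal_ne_top)]
  have h1 : ∀ ω : Fin n × Bool,
      ∫ z, lossB f z ∂(ENNReal.ofReal (s18m n e σ ω) • Measure.dirac (Xb ω.1, ω.2))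
      = s18m n e σ ω * lossB f (Xb ω.1, ω.2) := by
    intro ω
    rw [integral_smul_measure, integral_dirac, ENNReal.toReal_ofReal (s18m_nonneg he he2 σ ω),
      smul_eq_mul]
  rw [Finset.sum_congr rfl fun ω _ => h1 ω, Fintype.sum_prod_type]
  have h2 : ∀ i : Fin n, (∑ y : Bool, s18m n e σ (i, y) * lossB f (Xb i, y))
      = (1/(n:ℝ)) * (1/2 - e) + (2*e/(n:ℝ)) * (if f (Xb i) ≠ σ i then 1 else 0) := by
    intro i
    rw [Fintype.sum_bool]
    unfold s18m lossB
    cases hσ : σ i <;> cases hf : f (Xb i) <;> simp [hσ, hf] <;> ring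
  rw [Finset.sum_congr rfl fun i _ => h2 i, Finset.sum_add_distrib, Finset.sum_const,
    Finset.card_univ, Fintype.card_fin, ← Finset.mul_sum, Finset.sum_boole, nsmul_eq_mul]
  field_simp

lemma s18M_singleton [MeasurableSingletonClass Xs] (hXb : Function.Injective Xb)
    (ω₀ : Fin n × Bool) :
    s18M Xb e σ {(Xb ω₀.1, ω₀.2)} = ENNReal.ofReal (s18m n e σ ω₀) := by
  rw [s18M, Measure.finset_sum_apply]
  have h : ∀ ω : Fin n × Bool,
      (ENNReal.ofReal (s18m n e σ ω) • Measure.dirac (Xb ω.1, ω.2))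
        ({(Xb ω₀.1, ω₀.2)} : Set (Xs × Bool))
      = if ω = ω₀ then ENNReal.ofReal (s18m n e σ ω) else 0 := by
    intro ω
    rw [Measure.smul_apply, Measure.dirac_apply]
    rcases eq_or_ne ω ω₀ with rfl | hne
    · rw [if_pos rfl, Set.indicator_of_mem (by simp)]
      simp
    · rw [if_neg hne, Set.indicator_of_notMem, smul_zero]
      simp only [Set.mem_singleton_iff, Prod.mk.injEq, not_and]
      intro hx
      have h1 : ω.1 = ω₀.1 := hXb hx
      intro h2
      exact hne (Prod.ext h1 h2)
  rw [Finset.sum_congr rfl fun ω _ => h ω, Finset.sum_ite_eq' Finset.univ ω₀]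
  simp
end M

end S18Aux

open Finset in
theorem stmt18 {Xs : Type*} [MeasurableSpace Xs] [MeasurableSingletonClass Xs]
    {ι : Type*} [MeasurableSpace ι] [Nonempty ι] (H : ι → Xs → Bool)
    (ν : ℕ) (hν : 1 ≤ ν)
    (hVC : ∃ Xb : Fin ν → Xs, Function.Injective Xb ∧
      ∀ b : Fin ν → Bool, ∃ h, ∀ i, H h (Xb i) = b i)
    (T : ℕ) (hT : 1 ≤ T) (Δ : ℕ → ℝ)
    (hΔ0 : ∀ r, 0 ≤ Δ r) (hΔ1 : Δ 1 = 0)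
    (hΔmono : ∀ r s, 1 ≤ r → r ≤ s → s ≤ T → Δ r ≤ Δ s)
    (hΦ : (Finset.Icc 1 T).inf' (Finset.nonempty_Icc.mpr hT)
      (fun r => Real.sqrt (ν / r) + Δ r) < 1 / 3)
    (A : (Fin T → Xs × Bool) → ι) (hA : Measurable A) :
    ∃ P : ℕ → Measure (Xs × Bool),
      (∀ t, IsProbabilityMeasure (P t)) ∧
      (∀ r : ℕ, 1 ≤ r → r ≤ T →
        (⨆ t : Fin r, ⨆ h : ι,
          |(∫ z, lossB (H h) z ∂(P T)) - ∫ z, lossB (H h) z ∂(P (T - (t : ℕ)))|)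
          ≤ Δ r) ∧
      ENNReal.ofReal (1 / 8) ≤
        (Measure.pi fun t : Fin T => P ((t : ℕ) + 1))
          {w | ((Finset.Icc 1 T).inf' (Finset.nonempty_Icc.mpr hT)
              (fun r => Real.sqrt (ν / r) + Δ r)) / (112 * Real.sqrt 6)
            ≤ (∫ z, lossB (H (A w)) z ∂(P T))
              - ⨅ h : ι, ∫ z, lossB (H h) z ∂(P T)} := by
  classical
  obtain ⟨Xb, hXbinj, hshat⟩ := hVC
  set Φ : ℝ := (Finset.Icc 1 T).inf' (Finset.nonempty_Icc.mpr hT)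
    (fun r => Real.sqrt (ν / r) + Δ r) with hΦdef
  have hν0 : (0:ℝ) < (ν:ℝ) := by exact_mod_cast hν
  have hT0 : (0:ℝ) < (T:ℝ) := by exact_mod_cast hT
  have hΦpos : 0 < Φ := by
    have hle : Real.sqrt ((ν:ℝ) / (T:ℝ)) ≤ Φ := by
      rw [hΦdef]
      refine Finset.le_inf' _ _ fun r hr => ?_
      obtain ⟨hr1, hrT⟩ := Finset.mem_Icc.mp hr
      have hr0 : (0:ℝ) < (r:ℝ) := by exact_mod_cast hr1
      have h1 : (ν:ℝ) / (T:ℝ) ≤ (ν:ℝ) / (r:ℝ) :=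
        div_le_div_of_nonneg_left (le_of_lt hν0) hr0 (by exact_mod_cast hrT)
      have := Real.sqrt_le_sqrt h1
      have h2 := hΔ0 r
      linarith
    have hpos : 0 < Real.sqrt ((ν:ℝ) / (T:ℝ)) := Real.sqrt_pos.mpr (by positivity)
    linarith
  have hs6 : (2:ℝ) ≤ Real.sqrt 6 := by
    rw [show (2:ℝ) = Real.sqrt 4 by
      rw [show (4:ℝ) = 2^2 by norm_num, Real.sqrt_sq (by norm_num)]]
    exact Real.sqrt_le_sqrt (by norm_num)
  have hs6' : (0:ℝ) < Real.sqrt 6 := by linarith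
  set ε : ℝ := Φ / (28 * Real.sqrt 6) with hεdef
  have hε0 : 0 < ε := by positivity
  have hε56 : ε ≤ Φ / 56 := by
    rw [hεdef]
    apply div_le_div_of_nonneg_left hΦpos.le (by norm_num)
    nlinarith
  have hεΦ : ε < Φ := by
    have : Φ / 56 < Φ := by
      apply div_lt_self hΦpos; norm_num
    linarith
  have hε4 : ε ≤ 1/4 := by
    have : Φ / 56 ≤ 1/4 := by
      rw [div_le_iff₀ (by norm_num : (0:ℝ) < 56)]
      nlinarith [hΦ, hΦdef]
    linarith
  have hε2 : ε ≤ 1/2 := by linarith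
  -- choose the window size k
  obtain ⟨k, hk1, hkT, hΔk, hup⟩ : ∃ k, 1 ≤ k ∧ k ≤ T ∧ Δ k < ε ∧
      (∀ r, 1 ≤ r → r ≤ T → k < r → ε ≤ Δ r) := by
    by_cases hcase : ∀ r, 1 ≤ r → r ≤ T → Δ r < ε
    · exact ⟨T, hT, le_rfl, hcase T hT le_rfl, fun r hr1 hrT hlt => absurd hrT (by omega)⟩
    · push_neg at hcase
      obtain ⟨r1, hr11, hr1T, hr1ε⟩ := hcase
      have hPex : ∃ r, 1 ≤ r ∧ r ≤ T ∧ ε ≤ Δ r := ⟨r1, hr11, hr1T, hr1ε⟩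
      obtain ⟨hr01, hr0T, hr0ε⟩ := Nat.find_spec hPex
      have hr02 : 2 ≤ Nat.find hPex := by
        by_contra hlt
        have h1 : Nat.find hPex = 1 := by omega
        rw [h1, hΔ1] at hr0ε
        linarith
      refine ⟨Nat.find hPex - 1, by omega, by omega, ?_, ?_⟩
      · have hmin := Nat.find_min hPex (m := Nat.find hPex - 1) (by omega)
        push_neg at hmin
        have h2 := hmin (by omega) (by omega)
        linarith
      · intro r hrr1 hrrT hlt
        have hr0r : Nat.find hPex ≤ r := by omega
        exact le_trans hr0ε (hΔmono (Nat.find hPex) r (by omega) hr0r hrrT)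
  -- bound on k
  have hkbound : 8 * (k:ℝ) * ε^2 ≤ (ν:ℝ) * (1/4) := by
    have hk0 : (0:ℝ) < (k:ℝ) := by exact_mod_cast hk1
    have hΦle : Φ ≤ Real.sqrt ((ν:ℝ) / (k:ℝ)) + Δ k := by
      rw [hΦdef]
      exact Finset.inf'_le _ (Finset.mem_Icc.mpr ⟨hk1, hkT⟩)
    have h1 : Φ - ε < Real.sqrt ((ν:ℝ) / (k:ℝ)) := by linarith
    have h2 : (Φ - ε)^2 < (ν:ℝ) / (k:ℝ) :=
      (Real.lt_sqrt (by linarith)).mp h1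
    have h3 : (k:ℝ) * (Φ - ε)^2 < (ν:ℝ) := by
      rw [mul_comm]
      exact (lt_div_iff₀ hk0).mp h2
    have h4 : 32 * ε^2 ≤ (Φ - ε)^2 := by nlinarith [hε56, hΦpos, hε0]
    nlinarith [h3, h4, hk0]
  -- apply the core lemma
  set φu : (Fin T → Fin ν × Bool) → (Fin T → Xs × Bool) :=
    fun u t => (Xb (u t).1, (u t).2) with hφudef
  obtain ⟨σ, hcore⟩ := s18core hν hk1 hkT hε0 hε4 hkbound
    (fun u i => H (A (φu u)) (Xb i))
  -- the distributions
  set P : ℕ → Measure (Xs × Bool) :=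
    fun t => if T - k < t then s18M Xb ε σ else s18M Xb 0 σ with hPdef
  have hprob : ∀ t, IsProbabilityMeasure (P t) := by
    intro t
    simp only [hPdef]
    split
    · exact s18M_prob hν hε0.le hε2
    · exact s18M_prob hν le_rfl (by norm_num)
  have hPT : P T = s18M Xb ε σ := by
    simp only [hPdef]
    simp only [if_pos (by omega : T - k < T)]
  set Wc : ι → ℕ := fun h => (Finset.univ.filter fun i => H h (Xb i) ≠ σ i).card with hWcdef
  have hWub : ∀ h : ι, (Wc h : ℝ) ≤ (ν:ℝ) := by
    intro h
    have hcle := (Finset.card_filter_le Finset.univ (fun i : Fin ν => H h (Xb i) ≠ σ i)).trans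
      (le_of_eq (by rw [Finset.card_univ, Fintype.card_fin]))
    exact_mod_cast hcle
  have hriskT : ∀ h : ι, ∫ z, lossB (H h) z ∂(P T)
      = 1/2 - ε + (2*ε/(ν:ℝ)) * (Wc h : ℝ) := by
    intro h
    rw [hPT, s18M_integral hν hε0.le hε2]
  have hrisk0 : ∀ (h : ι) (t : ℕ), ¬ (T - k < t) → ∫ z, lossB (H h) z ∂(P t) = 1/2 := by
    intro h t ht
    simp only [hPdef]
    simp only [if_neg ht]
    rw [s18M_integral hν le_rfl (by norm_num)]
    ring
  have hlb : ∀ h : ι, 1/2 - ε ≤ ∫ z, lossB (H h) z ∂(P T) := by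
    intro h
    rw [hriskT h]
    have : 0 ≤ (2*ε/(ν:ℝ)) * (Wc h : ℝ) := mul_nonneg (by positivity) (Nat.cast_nonneg _)
    linarith
  have hbdd : BddBelow (Set.range fun h : ι => ∫ z, lossB (H h) z ∂(P T)) := by
    refine ⟨1/2 - ε, ?_⟩
    rintro x ⟨h, rfl⟩
    exact hlb h
  have hinf : (⨅ h : ι, ∫ z, lossB (H h) z ∂(P T)) = 1/2 - ε := by
    apply le_antisymm
    · obtain ⟨hstar, hhstar⟩ := hshat σ
      have hW0 : Wc hstar = 0 := by
        rw [hWcdef, Finset.card_eq_zero, Finset.filter_eq_empty_iff]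
        intro i _
        simp [hhstar i]
      have hval : ∫ z, lossB (H hstar) z ∂(P T) = 1/2 - ε := by
        rw [hriskT hstar, hW0]
        norm_num
      calc (⨅ h : ι, ∫ z, lossB (H h) z ∂(P T))
          ≤ ∫ z, lossB (H hstar) z ∂(P T) := ciInf_le hbdd hstar
        _ = 1/2 - ε := hval
    · exact le_ciInf hlb
  refine ⟨P, hprob, ?_, ?_⟩
  · -- the drift condition
    intro r hr1 hrT
    refine Real.iSup_le (fun t => Real.iSup_le (fun h => ?_) (hΔ0 r)) (hΔ0 r)
    have htr : (t:ℕ) < r := t.2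
    by_cases hti : T - k < T - (t:ℕ)
    · have : P (T - (t:ℕ)) = P T := by
        simp only [hPdef]
        simp only [if_pos hti, if_pos (by omega : T - k < T)]
      rw [this, sub_self, abs_zero]
      exact hΔ0 r
    · rw [hriskT h, hrisk0 h (T - (t:ℕ)) hti]
      have hkr : k < r := by omega
      have hεΔ : ε ≤ Δ r := hup r hr1 hrT hkr
      have hWnn : (0:ℝ) ≤ (Wc h : ℝ) := Nat.cast_nonneg _
      have hterm : 0 ≤ (2*ε/(ν:ℝ)) * (Wc h : ℝ) := mul_nonneg (by positivity) (Nat.cast_nonneg _)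
      have hterm2 : (2*ε/(ν:ℝ)) * (Wc h : ℝ) ≤ 2*ε := by
        have := mul_le_mul_of_nonneg_left (hWub h) (by positivity : (0:ℝ) ≤ 2*ε/(ν:ℝ))
        calc (2*ε/(ν:ℝ)) * (Wc h : ℝ) ≤ (2*ε/(ν:ℝ)) * (ν:ℝ) := this
          _ = 2*ε := div_mul_cancel₀ _ (ne_of_gt hν0)
      rw [abs_le]
      constructor
      · linarith
      · linarith
  · -- the probability bound
    haveI : ∀ t : Fin T, IsProbabilityMeasure (P ((t:ℕ) + 1)) := fun t => hprob _
    haveI : ∀ t : Fin T, SigmaFinite (P ((t:ℕ) + 1)) := fun t => inferInstance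
    set S : Finset (Fin T → Fin ν × Bool) := Finset.univ.filter
      (fun u : Fin T → Fin ν × Bool =>
        (ν:ℝ) ≤ 8 * ((Finset.univ.filter fun i => H (A (φu u)) (Xb i) ≠ σ i).card : ℝ))
      with hSdef
    have hφinj : Function.Injective φu := by
      intro u u' huu
      funext t
      have := congrFun huu t
      rw [hφudef] at this
      simp only [Prod.mk.injEq] at this
      exact Prod.ext (hXbinj this.1) this.2
    have hsingle_meas : ∀ w : Fin T → Xs × Bool, MeasurableSet ({w} : Set (Fin T → Xs × Bool)) := by
      intro w
      rw [← Set.univ_pi_singleton]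
      exact MeasurableSet.univ_pi fun t => measurableSet_singleton _
    have hμsingle : ∀ u : Fin T → Fin ν × Bool,
        (Measure.pi fun t : Fin T => P ((t:ℕ) + 1)) {φu u}
        = ENNReal.ofReal (∏ t, s18w ν T k ε σ t (u t)) := by
      intro u
      rw [← Set.univ_pi_singleton, Measure.pi_pi]
      have hsing : ∀ t : Fin T, P ((t:ℕ) + 1) {φu u t}
          = ENNReal.ofReal (s18w ν T k ε σ t (u t)) := by
        intro t
        simp only [hPdef, hφudef]
        unfold s18w
        by_cases hti : T - k < (t:ℕ) + 1
        · rw [if_pos hti, if_pos hti]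
          exact s18M_singleton hXbinj (u t)
        · rw [if_neg hti, if_neg hti]
          exact s18M_singleton hXbinj (u t)
      rw [Finset.prod_congr rfl fun t _ => hsing t]
      rw [← ENNReal.ofReal_prod_of_nonneg]
      intro t _
      unfold s18w
      split
      · exact s18m_nonneg hε0.le hε2 σ (u t)
      · exact s18m_nonneg le_rfl (by norm_num) σ (u t)
    have hsub : (⋃ u ∈ S, ({φu u} : Set (Fin T → Xs × Bool)))
        ⊆ {w | Φ / (112 * Real.sqrt 6)
            ≤ (∫ z, lossB (H (A w)) z ∂(P T)) - ⨅ h : ι, ∫ z, lossB (H h) z ∂(P T)} := by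
      intro w hw
      simp only [Set.mem_iUnion, Set.mem_singleton_iff, exists_prop] at hw
      obtain ⟨u, huS, rfl⟩ := hw
      have hWu : (ν:ℝ) ≤ 8 * ((Finset.univ.filter
          fun i => H (A (φu u)) (Xb i) ≠ σ i).card : ℝ) := (Finset.mem_filter.mp huS).2
      simp only [Set.mem_setOf_eq]
      rw [hriskT (A (φu u)), hinf]
      simp only [hWcdef]
      have hstep : Φ / (112 * Real.sqrt 6) ≤ (2*ε/(ν:ℝ))
          * (((Finset.univ.filter fun i => H (A (φu u)) (Xb i) ≠ σ i).card : ℝ)) := by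
        have h8 : (ν:ℝ)/8 ≤ ((Finset.univ.filter
            fun i => H (A (φu u)) (Xb i) ≠ σ i).card : ℝ) := by linarith
        have hc : (2*ε/(ν:ℝ)) * ((ν:ℝ)/8) = Φ / (112 * Real.sqrt 6) := by
          rw [hεdef]
          field_simp
          ring
        calc Φ / (112 * Real.sqrt 6) = (2*ε/(ν:ℝ)) * ((ν:ℝ)/8) := hc.symm
          _ ≤ _ := mul_le_mul_of_nonneg_left h8 (by positivity)
      linarith [hstep]
    have hdisj : (↑S : Set (Fin T → Fin ν × Bool)).PairwiseDisjoint
        (fun u => ({φu u} : Set (Fin T → Xs × Bool))) := by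
      intro u _ u' _ huu
      simp only [Function.onFun, Set.disjoint_iff]
      intro w hw
      simp only [Set.mem_inter_iff, Set.mem_singleton_iff] at hw
      exact absurd (hφinj (hw.1 ▸ hw.2.symm ▸ rfl : φu u = φu u')) huu
    calc ENNReal.ofReal (1/8)
        ≤ ENNReal.ofReal (∑ u ∈ S, ∏ t, s18w ν T k ε σ t (u t)) :=
          ENNReal.ofReal_le_ofReal hcore
      _ = ∑ u ∈ S, ENNReal.ofReal (∏ t, s18w ν T k ε σ t (u t)) := by
          rw [ENNReal.ofReal_sum_of_nonneg]
          intro u _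
          refine Finset.prod_nonneg fun t _ => ?_
          unfold s18w
          split
          · exact s18m_nonneg hε0.le hε2 σ (u t)
          · exact s18m_nonneg le_rfl (by norm_num) σ (u t)
      _ = ∑ u ∈ S, (Measure.pi fun t : Fin T => P ((t:ℕ) + 1)) {φu u} := by
          exact Finset.sum_congr rfl fun u _ => (hμsingle u).symm
      _ = (Measure.pi fun t : Fin T => P ((t:ℕ) + 1)) (⋃ u ∈ S, {φu u}) :=
          (measure_biUnion_finset hdisj fun u _ => hsingle_meas (φu u)).symm
      _ ≤ _ := measure_mono hsub
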